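/- Let p > 1, let n_A, n_B, n ≥ 1 be integers, and let U ⊆ ℂ^{n_A} ⊗ ℂ^{n_B} be a nonzero subspace. Let Ū denote the subspace of entrywise complex conjugates (with respect to the standard product basis) of vectors of U, and view U ⊗ Ū as a subspace of ℂ^{n_A²} ⊗ ℂ^{n_B²} via the regrouping isomorphism (ℂ^{n_A} ⊗ ℂ^{n_B}) ⊗ (ℂ^{n_A} ⊗ ℂ^{n_B}) ≅ (ℂ^{n_A} ⊗ ℂ^{n_A}) ⊗ (ℂ^{n_B} ⊗ ℂ^{n_B}). Then H_{min,p}(U ⊗ Ū) ≤ (p/(1−p)) · log₂(dim(U)/(n_A · n_B)). -/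

import Mathlib

/-
Common definitions.

We model the tensor product `ℂ^{n₁} ⊗ ⋯ ⊗ ℂ^{n_m}` concretely as
`EuclideanSpace ℂ (∀ i, Fin (n i))` (coordinates with respect to the standard
product basis), and the `d`-fold tensor power `(ℂ^a)^{⊗ d}` as
`EuclideanSpace ℂ (ι → Fin a)` for an index type `ι` of cardinality `d`.
-/

noncomputable section

open Finset

/-- The product (elementary tensor) vector `φ₁ ⊗ ⋯ ⊗ φ_m` in a multipartite space,
in coordinates. -/
def prodVec {m : ℕ} {n : Fin m → ℕ} (φ : ∀ i, EuclideanSpace ℂ (Fin (n i))) :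
    EuclideanSpace ℂ (∀ i, Fin (n i)) :=
  WithLp.toLp 2 (fun v => ∏ i, φ i (v i))

/-- The product vector `φ₁ ⊗ ⋯ ⊗ φ_m` in `(ℂ^n)^{⊗ m}`, in coordinates. -/
def prodVecC {m n : ℕ} (φ : Fin m → EuclideanSpace ℂ (Fin n)) :
    EuclideanSpace ℂ (Fin m → Fin n) :=
  WithLp.toLp 2 (fun v => ∏ i, φ i (v i))

/-- The product vector `φ₁ ⊗ φ₂` in a bipartite space, in coordinates. -/
def prodVec2 {ι₁ ι₂ : Type*} (φ₁ : EuclideanSpace ℂ ι₁) (φ₂ : EuclideanSpace ℂ ι₂) :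
    EuclideanSpace ℂ (ι₁ × ι₂) :=
  WithLp.toLp 2 (fun p => φ₁ p.1 * φ₂ p.2)

/-- Geometric measure of entanglement of a subspace of a multipartite space:
`E(U) = inf { 1 - ⟨φ₁⊗⋯⊗φ_m, Π_U (φ₁⊗⋯⊗φ_m)⟩ : ‖φ_i‖ = 1 }`, where we use that
`⟨x, Π_U x⟩ = ‖Π_U x‖²`. -/
def gme {m : ℕ} {n : Fin m → ℕ} (U : Submodule ℂ (EuclideanSpace ℂ (∀ i, Fin (n i)))) : ℝ :=
  sInf {x | ∃ φ : ∀ i, EuclideanSpace ℂ (Fin (n i)),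
    (∀ i, ‖φ i‖ = 1) ∧ x = 1 - ‖U.orthogonalProjectionOnto (prodVec φ)‖ ^ 2}

/-- Geometric measure of entanglement of a subspace of `(ℂ^n)^{⊗ m}`. -/
def gmeC {m n : ℕ} (U : Submodule ℂ (EuclideanSpace ℂ (Fin m → Fin n))) : ℝ :=
  sInf {x | ∃ φ : Fin m → EuclideanSpace ℂ (Fin n),
    (∀ i, ‖φ i‖ = 1) ∧ x = 1 - ‖U.orthogonalProjectionOnto (prodVecC φ)‖ ^ 2}

/-- Geometric measure of entanglement of a subspace of a bipartite space. -/
def gme2 {ι₁ ι₂ : Type*} [Fintype ι₁] [Fintype ι₂]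
    (U : Submodule ℂ (EuclideanSpace ℂ (ι₁ × ι₂))) : ℝ :=
  sInf {x | ∃ (φ₁ : EuclideanSpace ℂ ι₁) (φ₂ : EuclideanSpace ℂ ι₂),
    ‖φ₁‖ = 1 ∧ ‖φ₂‖ = 1 ∧ x = 1 - ‖U.orthogonalProjectionOnto (prodVec2 φ₁ φ₂)‖ ^ 2}

/-- The symmetric subspace `S^{|ι|}(ℂ^a)` of `(ℂ^a)^{⊗ ι}`: tensors invariant under all
permutations of the tensor factors. -/
def symmSub (a : ℕ) (ι : Type*) : Submodule ℂ (EuclideanSpace ℂ (ι → Fin a)) where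
  carrier := {ψ | ∀ σ : Equiv.Perm ι, ∀ v : ι → Fin a, ψ (v ∘ σ) = ψ v}
  zero_mem' := fun _ _ => rfl
  add_mem' := by
    intro x y hx hy σ v
    show x (v ∘ σ) + y (v ∘ σ) = x v + y v
    rw [hx σ v, hy σ v]
  smul_mem' := by
    intro c x hx σ v
    show c * x (v ∘ σ) = c * x v
    rw [hx σ v]

/-- Splitting an index `v : Fin d ⊕ Fin d → Fin a` into a pair of indices, realizing
`(ℂ^a)^{⊗ 2d} ≅ (ℂ^a)^{⊗ d} ⊗ (ℂ^a)^{⊗ d}`. -/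
def pairSplit {a d : ℕ} (v : (Fin d ⊕ Fin d) → Fin a) : (Fin d → Fin a) × (Fin d → Fin a) :=
  (v ∘ Sum.inl, v ∘ Sum.inr)

/-- The symmetric subspace `S^{2d}(ℂ^a)`, viewed inside
`(ℂ^a)^{⊗ d} ⊗ (ℂ^a)^{⊗ d} = EuclideanSpace ℂ ((Fin d → Fin a) × (Fin d → Fin a))`. -/
def symmSub2 (a d : ℕ) :
    Submodule ℂ (EuclideanSpace ℂ ((Fin d → Fin a) × (Fin d → Fin a))) where
  carrier := {ψ | ∀ σ : Equiv.Perm (Fin d ⊕ Fin d), ∀ v : (Fin d ⊕ Fin d) → Fin a,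
    ψ (pairSplit (v ∘ σ)) = ψ (pairSplit v)}
  zero_mem' := fun _ _ => rfl
  add_mem' := by
    intro x y hx hy σ v
    show x (pairSplit (v ∘ σ)) + y (pairSplit (v ∘ σ)) = x (pairSplit v) + y (pairSplit v)
    rw [hx σ v, hy σ v]
  smul_mem' := by
    intro c x hx σ v
    show c * x (pairSplit (v ∘ σ)) = c * x (pairSplit v)
    rw [hx σ v]

/-- The tensor product `W₁ ⊗ W₂` of subspaces, as the span of the elementary tensors,
inside the concrete bipartite space. -/
def tensorPairs {ι₁ ι₂ : Type*} [Fintype ι₁] [Fintype ι₂]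
    (W₁ : Submodule ℂ (EuclideanSpace ℂ ι₁)) (W₂ : Submodule ℂ (EuclideanSpace ℂ ι₂)) :
    Submodule ℂ (EuclideanSpace ℂ (ι₁ × ι₂)) :=
  Submodule.span ℂ {χ | ∃ ψ ∈ W₁, ∃ φ ∈ W₂, χ = prodVec2 ψ φ}

/-- The tensor product `U ⊗ V` of two bipartite subspaces
`U, V ⊆ ℂ^{ι₁} ⊗ ℂ^{ι₂}`, viewed as a bipartite subspace of
`(ℂ^{ι₁} ⊗ ℂ^{ι₁}) ⊗ (ℂ^{ι₂} ⊗ ℂ^{ι₂})` via the regrouping isomorphism that swaps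
the middle two tensor factors. -/
def tensorSub {ι₁ ι₂ : Type*} [Fintype ι₁] [Fintype ι₂]
    (U V : Submodule ℂ (EuclideanSpace ℂ (ι₁ × ι₂))) :
    Submodule ℂ (EuclideanSpace ℂ ((ι₁ × ι₁) × (ι₂ × ι₂))) :=
  Submodule.span ℂ {χ | ∃ ψ ∈ U, ∃ φ ∈ V,
    χ = WithLp.toLp 2 (fun p => ψ (p.1.1, p.2.1) * φ (p.1.2, p.2.2))}

/-- Entrywise complex conjugate of a vector, with respect to the standard basis. -/
def conjVec {ι : Type*} (ψ : EuclideanSpace ℂ ι) : EuclideanSpace ℂ ι :=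
  WithLp.toLp 2 (fun v => starRingEnd ℂ (ψ v))

/-- The subspace `Ū` of entrywise complex conjugates of vectors of `U`. -/
def conjSubmodule {ι : Type*} (U : Submodule ℂ (EuclideanSpace ℂ ι)) :
    Submodule ℂ (EuclideanSpace ℂ ι) where
  carrier := conjVec '' U
  zero_mem' := ⟨0, U.zero_mem, by
    ext v; show starRingEnd ℂ 0 = 0; exact map_zero _⟩
  add_mem' := by
    rintro a b ⟨x, hx, rfl⟩ ⟨y, hy, rfl⟩
    exact ⟨x + y, U.add_mem hx hy, by
      ext v; exact map_add (starRingEnd ℂ) (x v) (y v)⟩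
  smul_mem' := by
    rintro c a ⟨x, hx, rfl⟩
    refine ⟨starRingEnd ℂ c • x, U.smul_mem _ hx, ?_⟩
    ext v
    show starRingEnd ℂ (starRingEnd ℂ c * x v) = c * starRingEnd ℂ (x v)
    simp

/-- The content (type) of a word `w : Fin d → Fin a`: the vector `α ∈ ℤ_{≥0}^a`
recording how many times each letter occurs. -/
def wordContent {a d : ℕ} (w : Fin d → Fin a) : Fin a → ℕ :=
  fun i => (Finset.univ.filter fun j => w j = i).card

/-- The monomial orthonormal basis vector `|α⟩ = C(d,α)^{1/2} Π_{S^d(ℂ^a)} (e₁^{⊗α₁} ⊗ ⋯ ⊗ e_a^{⊗α_a})`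
of the symmetric subspace `S^d(ℂ^a)`, where `α = wordContent w` and
`e₁^{⊗α₁} ⊗ ⋯ ⊗ e_a^{⊗α_a}` is the standard basis vector of `(ℂ^a)^{⊗ d}` indexed by any word `w`
of content `α` (the projection does not depend on the choice of such a word). -/
def monVec (a d : ℕ) (w : Fin d → Fin a) : EuclideanSpace ℂ (Fin d → Fin a) :=
  (Real.sqrt (Nat.multinomial Finset.univ (wordContent w)) : ℂ) •
    ((symmSub a (Fin d)).orthogonalProjectionOnto (EuclideanSpace.single w 1) :
      EuclideanSpace ℂ (Fin d → Fin a))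

/-- The squared Schmidt coefficients of a bipartite vector `ψ`, i.e. the eigenvalues of
`M Mᴴ` where `M` is the coefficient matrix of `ψ`. -/
def schmidtSqCoeffs {ι₁ ι₂ : Type*} [Fintype ι₁] [Fintype ι₂] [DecidableEq ι₁]
    (ψ : EuclideanSpace ℂ (ι₁ × ι₂)) : ι₁ → ℝ :=
  (Matrix.isHermitian_mul_conjTranspose_self (Matrix.of fun i j => ψ (i, j))).eigenvalues

/-- The Rényi `p`-entropy of (the squared Schmidt coefficients of) a bipartite vector. -/
def renyiEnt (p : ℝ) {ι₁ ι₂ : Type*} [Fintype ι₁] [Fintype ι₂] [DecidableEq ι₁]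
    (ψ : EuclideanSpace ℂ (ι₁ × ι₂)) : ℝ :=
  (1 / (1 - p)) * Real.logb 2 (∑ i, schmidtSqCoeffs ψ i ^ p)

/-- The minimum output Rényi `p`-entropy of a bipartite subspace. -/
def hminEnt (p : ℝ) {ι₁ ι₂ : Type*} [Fintype ι₁] [Fintype ι₂] [DecidableEq ι₁]
    (U : Submodule ℂ (EuclideanSpace ℂ (ι₁ × ι₂))) : ℝ :=
  sInf {x | ∃ ψ ∈ U, ‖ψ‖ = 1 ∧ x = renyiEnt p ψ}

end

/-!
Let `(ψₖ)` be an orthonormal basis of `U`, `d = dim U`, and `χ = d^{-1/2} ∑ₖ ψₖ ⊗ ψ̄ₖ ∈ U ⊗ Ū`,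
a unit vector. Its overlap with the product `Φ_A ⊗ Φ_B` of the maximally entangled states of
`ℂ^{n_A} ⊗ ℂ^{n_A}` and `ℂ^{n_B} ⊗ ℂ^{n_B}` is `d^{-1/2} ∑ₖ ‖ψₖ‖² / √(n_A n_B) = √(d / (n_A n_B))`.
By Cauchy–Schwarz and the Rayleigh bound, the largest squared Schmidt coefficient `λ` of any vector
is at least its squared overlap with a product state, so `λ ≥ d / (n_A n_B)`, and
`H_p(χ) ≤ (1/(1-p)) log₂ λ^p` since `∑ᵢ λᵢ^p ≥ λ^p` and `1 - p < 0`.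
-/

open Finset
open scoped InnerProductSpace

namespace Matrix

variable {𝕜 m n : Type*} [RCLike 𝕜] [Fintype m] [Fintype n] [DecidableEq m]

lemma IsHermitian.re_inner_toEuclideanLin_self {A : Matrix m m 𝕜} (hA : A.IsHermitian)
    (u : EuclideanSpace 𝕜 m) :
    RCLike.re ⟪u, toEuclideanLin A u⟫_𝕜 =
      ∑ i, hA.eigenvalues i * ‖⟪hA.eigenvectorBasis i, u⟫_𝕜‖ ^ 2 := by
  set b := hA.eigenvectorBasis
  have hb (i : m) : ⟪b i, toEuclideanLin A u⟫_𝕜 = hA.eigenvalues i * ⟪b i, u⟫_𝕜 := by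
    rw [← isSymmetric_toEuclideanLin_iff.mpr hA, toLpLin_apply, hA.mulVec_eigenvectorBasis,
      WithLp.toLp_smul, WithLp.toLp_ofLp, inner_smul_left_eq_smul, RCLike.real_smul_eq_coe_mul]
  rw [← b.sum_inner_mul_inner, map_sum]
  refine sum_congr rfl fun i _ => ?_
  rw [hb, mul_left_comm, ← inner_conj_symm, RCLike.conj_mul]
  norm_cast

lemma IsHermitian.exists_re_inner_toEuclideanLin_self_le [Nonempty m] {A : Matrix m m 𝕜}
    (hA : A.IsHermitian) (u : EuclideanSpace 𝕜 m) :
    ∃ j, RCLike.re ⟪u, toEuclideanLin A u⟫_𝕜 ≤ hA.eigenvalues j * ‖u‖ ^ 2 := by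
  obtain ⟨j, -, hj⟩ := exists_max_image univ hA.eigenvalues univ_nonempty
  refine ⟨j, ?_⟩
  rw [hA.re_inner_toEuclideanLin_self, ← hA.eigenvectorBasis.sum_sq_norm_inner_right u, mul_sum]
  gcongr with i
  exact hj i (mem_univ i)

lemma norm_toEuclideanLin_conjTranspose_sq [DecidableEq n] (M : Matrix m n 𝕜)
    (u : EuclideanSpace 𝕜 m) :
    ‖toEuclideanLin Mᴴ u‖ ^ 2 = RCLike.re ⟪u, toEuclideanLin (M * Mᴴ) u⟫_𝕜 := by
  rw [toLpLin_mul_same, LinearMap.comp_apply, ← LinearMap.adjoint_inner_left,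
    ← toEuclideanLin_conjTranspose_eq_adjoint, inner_self_eq_norm_sq]

end Matrix

lemma norm_conjVec {ι : Type*} [Fintype ι] (ψ : EuclideanSpace ℂ ι) : ‖conjVec ψ‖ = ‖ψ‖ := by
  simp only [EuclideanSpace.norm_eq, conjVec, RCLike.norm_conj]

lemma inner_conjVec {ι : Type*} [Fintype ι] (ψ φ : EuclideanSpace ℂ ι) :
    ⟪conjVec ψ, conjVec φ⟫_ℂ = ⟪φ, ψ⟫_ℂ := by
  simp only [PiLp.inner_apply, conjVec, RCLike.inner_apply, Complex.conj_conj]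
  exact sum_congr rfl fun i _ => mul_comm _ _

section Schmidt

open Matrix

variable {ι₁ ι₂ : Type*} [Fintype ι₁] [Fintype ι₂] [DecidableEq ι₁]

lemma schmidtSqCoeffs_nonneg (ψ : EuclideanSpace ℂ (ι₁ × ι₂)) (i : ι₁) :
    0 ≤ schmidtSqCoeffs ψ i :=
  eigenvalues_self_mul_conjTranspose_nonneg _ _

lemma sum_schmidtSqCoeffs (ψ : EuclideanSpace ℂ (ι₁ × ι₂)) :
    ∑ i, schmidtSqCoeffs ψ i = ‖ψ‖ ^ 2 := by
  have htrace :=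
    (isHermitian_mul_conjTranspose_self (of fun i j => ψ (i, j))).trace_eq_sum_eigenvalues
  have htrace' : (of (fun i j => ψ (i, j)) * (of fun i j => ψ (i, j))ᴴ).trace =
      ((‖ψ‖ ^ 2 : ℝ) : ℂ) := by
    simp [EuclideanSpace.norm_sq_eq, Fintype.sum_prod_type, trace, mul_apply, Complex.mul_conj,
      Complex.normSq_eq_norm_sq]
  simpa only [schmidtSqCoeffs, map_sum, RCLike.ofReal_re, RCLike.re_to_complex, Complex.ofReal_re]
    using congrArg RCLike.re (htrace.symm.trans htrace')

lemma exists_norm_inner_prodVec2_sq_le_schmidtSqCoeffs (ψ : EuclideanSpace ℂ (ι₁ × ι₂))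
    {u : EuclideanSpace ℂ ι₁} {v : EuclideanSpace ℂ ι₂} (hu : ‖u‖ = 1) (hv : ‖v‖ = 1) :
    ∃ i, ‖⟪prodVec2 u v, ψ⟫_ℂ‖ ^ 2 ≤ schmidtSqCoeffs ψ i := by
  classical
  set M := of fun i j => ψ (i, j)
  have : Nonempty ι₁ := by
    by_contra h
    rw [not_nonempty_iff] at h
    simp [Subsingleton.elim u 0] at hu
  have hinner : ⟪prodVec2 u v, ψ⟫_ℂ = ⟪toEuclideanLin Mᴴ u, conjVec v⟫_ℂ := by
    simp only [PiLp.inner_apply, prodVec2, conjVec, RCLike.inner_apply, toLpLin_apply, mulVec,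
      dotProduct, conjTranspose_apply, M, of_apply, Fintype.sum_prod_type, map_sum, map_mul,
      RCLike.star_def, Complex.conj_conj, mul_sum]
    rw [sum_comm]
    exact sum_congr rfl fun i _ => sum_congr rfl fun j _ => by ring
  obtain ⟨i, hi⟩ := (isHermitian_mul_conjTranspose_self M).exists_re_inner_toEuclideanLin_self_le u
  refine ⟨i, ?_⟩
  calc ‖⟪prodVec2 u v, ψ⟫_ℂ‖ ^ 2 ≤ ‖toEuclideanLin Mᴴ u‖ ^ 2 := by
        rw [hinner]
        gcongr
        simpa [norm_conjVec, hv] using norm_inner_le_norm (𝕜 := ℂ) (toEuclideanLin Mᴴ u) (conjVec v)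
    _ ≤ schmidtSqCoeffs ψ i := by
        rw [norm_toEuclideanLin_conjTranspose_sq, schmidtSqCoeffs]
        simpa [hu] using hi

end Schmidt

section Renyi

variable {p : ℝ} {ι₁ ι₂ : Type*} [Fintype ι₁] [Fintype ι₂] [DecidableEq ι₁]

lemma renyiEnt_nonneg (hp : 1 < p) {ψ : EuclideanSpace ℂ (ι₁ × ι₂)} (hψ : ‖ψ‖ = 1) :
    0 ≤ renyiEnt p ψ := by
  have hsum : ∑ i, schmidtSqCoeffs ψ i = 1 := by rw [sum_schmidtSqCoeffs, hψ, one_pow]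
  have hpow_le : ∑ i, schmidtSqCoeffs ψ i ^ p ≤ 1 := by
    rw [← hsum]
    gcongr with i
    refine Real.rpow_le_self_of_le_one (schmidtSqCoeffs_nonneg ψ i) ?_ hp.le
    rw [← hsum]
    exact single_le_sum (fun j _ => schmidtSqCoeffs_nonneg ψ j) (mem_univ i)
  have hlog : Real.logb 2 (∑ i, schmidtSqCoeffs ψ i ^ p) ≤ 0 :=
    Real.logb_nonpos one_lt_two
      (sum_nonneg fun i _ => Real.rpow_nonneg (schmidtSqCoeffs_nonneg ψ i) p) hpow_le
  exact mul_nonneg_of_nonpos_of_nonpos (by rw [one_div, inv_nonpos]; linarith) hlog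

lemma renyiEnt_le_of_le_schmidtSqCoeffs (hp : 1 < p) {ψ : EuclideanSpace ℂ (ι₁ × ι₂)} {t : ℝ}
    (ht : 0 < t) {i : ι₁} (hi : t ≤ schmidtSqCoeffs ψ i) :
    renyiEnt p ψ ≤ p / (1 - p) * Real.logb 2 t := by
  have hpow : t ^ p ≤ ∑ j, schmidtSqCoeffs ψ j ^ p :=
    (Real.rpow_le_rpow ht.le hi (by linarith)).trans
      (single_le_sum (fun j _ => Real.rpow_nonneg (schmidtSqCoeffs_nonneg ψ j) p) (mem_univ i))
  calc renyiEnt p ψ ≤ 1 / (1 - p) * Real.logb 2 (t ^ p) := by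
        refine mul_le_mul_of_nonpos_left ?_ (by rw [one_div, inv_nonpos]; linarith)
        exact Real.logb_le_logb_of_le one_lt_two (Real.rpow_pos_of_pos ht p) hpow
    _ = p / (1 - p) * Real.logb 2 t := by
        rw [Real.logb_rpow_eq_mul_logb_of_pos ht]
        ring

lemma hminEnt_le_renyiEnt (hp : 1 < p) {U : Submodule ℂ (EuclideanSpace ℂ (ι₁ × ι₂))}
    {ψ : EuclideanSpace ℂ (ι₁ × ι₂)} (hψU : ψ ∈ U) (hψ : ‖ψ‖ = 1) :
    hminEnt p U ≤ renyiEnt p ψ :=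
  csInf_le ⟨0, by rintro _ ⟨φ, -, hφ, rfl⟩; exact renyiEnt_nonneg hp hφ⟩ ⟨ψ, hψU, hψ, rfl⟩

lemma hminEnt_le_of_le_norm_inner_prodVec2_sq (hp : 1 < p)
    {U : Submodule ℂ (EuclideanSpace ℂ (ι₁ × ι₂))} {ψ : EuclideanSpace ℂ (ι₁ × ι₂)}
    (hψU : ψ ∈ U) (hψ : ‖ψ‖ = 1) {u : EuclideanSpace ℂ ι₁} {v : EuclideanSpace ℂ ι₂}
    (hu : ‖u‖ = 1) (hv : ‖v‖ = 1) {t : ℝ} (ht : 0 < t) (htψ : t ≤ ‖⟪prodVec2 u v, ψ⟫_ℂ‖ ^ 2) :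
    hminEnt p U ≤ p / (1 - p) * Real.logb 2 t := by
  obtain ⟨i, hi⟩ := exists_norm_inner_prodVec2_sq_le_schmidtSqCoeffs ψ hu hv
  exact (hminEnt_le_renyiEnt hp hψU hψ).trans
    (renyiEnt_le_of_le_schmidtSqCoeffs hp ht (htψ.trans hi))

end Renyi

lemma Orthonormal.norm_sum_sq {𝕜 E κ : Type*} [RCLike 𝕜] [NormedAddCommGroup E]
    [InnerProductSpace 𝕜 E] [Fintype κ] {v : κ → E} (hv : Orthonormal 𝕜 v) :
    ‖∑ k, v k‖ ^ 2 = Fintype.card κ := by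
  classical
  rw [← RCLike.ofReal_inj (K := 𝕜), RCLike.ofReal_pow, ← inner_self_eq_norm_sq_to_K, sum_inner]
  simp [inner_sum, orthonormal_iff_ite.mp hv]

section RegroupedTensor

variable {ι₁ ι₂ : Type*} [Fintype ι₁] [Fintype ι₂]

def regroupTensor (ψ φ : EuclideanSpace ℂ (ι₁ × ι₂)) :
    EuclideanSpace ℂ ((ι₁ × ι₁) × (ι₂ × ι₂)) :=
  WithLp.toLp 2 fun q => ψ (q.1.1, q.2.1) * φ (q.1.2, q.2.2)

lemma regroupTensor_mem_tensorSub {U V : Submodule ℂ (EuclideanSpace ℂ (ι₁ × ι₂))}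
    {ψ φ : EuclideanSpace ℂ (ι₁ × ι₂)} (hψ : ψ ∈ U) (hφ : φ ∈ V) :
    regroupTensor ψ φ ∈ tensorSub U V :=
  Submodule.subset_span ⟨ψ, hψ, φ, hφ, rfl⟩

lemma inner_regroupTensor (ψ φ ψ' φ' : EuclideanSpace ℂ (ι₁ × ι₂)) :
    ⟪regroupTensor ψ φ, regroupTensor ψ' φ'⟫_ℂ = ⟪ψ, ψ'⟫_ℂ * ⟪φ, φ'⟫_ℂ := by
  simp only [PiLp.inner_apply, regroupTensor, RCLike.inner_apply, Fintype.sum_prod_type,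
    map_mul, sum_mul_sum]
  refine sum_congr rfl fun _ _ => sum_congr rfl fun _ _ =>
    sum_congr rfl fun _ _ => sum_congr rfl fun _ _ => by ring

lemma orthonormal_regroupTensor_conjVec {κ : Type*} {b : κ → EuclideanSpace ℂ (ι₁ × ι₂)}
    (hb : Orthonormal ℂ b) : Orthonormal ℂ fun k => regroupTensor (b k) (conjVec (b k)) := by
  classical
  rw [orthonormal_iff_ite] at hb ⊢
  intro k l
  rw [inner_regroupTensor, inner_conjVec, hb, hb]
  split_ifs with h₁ h₂ h₂ <;> simp_all

variable {κ : Type*} [Fintype κ] {b : κ → EuclideanSpace ℂ (ι₁ × ι₂)}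

lemma Orthonormal.norm_sum_regroupTensor_conjVec (hb : Orthonormal ℂ b) :
    ‖∑ k, regroupTensor (b k) (conjVec (b k))‖ = √(Fintype.card κ) := by
  rw [← Real.sqrt_sq (norm_nonneg _), (orthonormal_regroupTensor_conjVec hb).norm_sum_sq]

variable [DecidableEq ι₁] [DecidableEq ι₂]

noncomputable def maxEntVec (ι : Type*) [Fintype ι] [DecidableEq ι] : EuclideanSpace ℂ (ι × ι) :=
  WithLp.toLp 2 fun q => if q.1 = q.2 then ((√(Fintype.card ι))⁻¹ : ℝ) else 0

lemma norm_maxEntVec (ι : Type*) [Fintype ι] [DecidableEq ι] [Nonempty ι] :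
    ‖maxEntVec ι‖ = 1 := by
  rw [EuclideanSpace.norm_eq, Real.sqrt_eq_one]
  simp [maxEntVec, Fintype.sum_prod_type, apply_ite]

lemma inner_prodVec2_maxEntVec_regroupTensor_conjVec (ψ : EuclideanSpace ℂ (ι₁ × ι₂)) :
    ⟪prodVec2 (maxEntVec ι₁) (maxEntVec ι₂), regroupTensor ψ (conjVec ψ)⟫_ℂ =
      ((√(Fintype.card ι₁ * Fintype.card ι₂))⁻¹ * ‖ψ‖ ^ 2 : ℝ) := by
  simp only [prodVec2, maxEntVec, regroupTensor, conjVec, PiLp.inner_apply, RCLike.inner_apply,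
    mul_ite, ite_mul, zero_mul, mul_zero, apply_ite (starRingEnd ℂ), map_mul, map_inv₀, map_zero,
    Complex.conj_ofReal, Fintype.sum_prod_type, sum_ite_eq, mem_univ, ↓reduceIte, sum_ite_irrel,
    sum_const_zero, Complex.mul_conj, Complex.normSq_eq_norm_sq, Real.sqrt_mul (Nat.cast_nonneg _),
    mul_inv_rev, EuclideanSpace.norm_sq_eq, mul_sum, Complex.ofReal_sum, Complex.ofReal_mul,
    Complex.ofReal_pow, Complex.ofReal_inv]
  exact sum_congr rfl fun _ _ => sum_congr rfl fun _ _ => by ring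


lemma Orthonormal.inner_prodVec2_maxEntVec_sum_regroupTensor_conjVec (hb : Orthonormal ℂ b) :
    ⟪prodVec2 (maxEntVec ι₁) (maxEntVec ι₂), ∑ k, regroupTensor (b k) (conjVec (b k))⟫_ℂ =
      (Fintype.card κ * (√(Fintype.card ι₁ * Fintype.card ι₂))⁻¹ : ℝ) := by
  simp only [inner_sum, inner_prodVec2_maxEntVec_regroupTensor_conjVec, hb.1, one_pow, mul_one,
    sum_const, card_univ, nsmul_eq_mul]
  push_cast
  ring

end RegroupedTensor

theorem hminEnt_tensorSub_conjSubmodule_le {p : ℝ} (hp : 1 < p) {ι₁ ι₂ : Type*} [Fintype ι₁]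
    [Fintype ι₂] [DecidableEq ι₁] {U : Submodule ℂ (EuclideanSpace ℂ (ι₁ × ι₂))} (hU : U ≠ ⊥) :
    hminEnt p (tensorSub U (conjSubmodule U)) ≤
      p / (1 - p) * Real.logb 2
        (Module.finrank ℂ U / (Fintype.card ι₁ * Fintype.card ι₂)) := by
  classical
  obtain ⟨i₁, i₂⟩ : Nonempty (ι₁ × ι₂) := by
    by_contra h
    rw [not_nonempty_iff] at h
    exact hU (Subsingleton.elim _ _)
  have : Nonempty ι₁ := ⟨i₁⟩
  have : Nonempty ι₂ := ⟨i₂⟩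
  have : Nontrivial U := Submodule.nontrivial_iff_ne_bot.mpr hU
  set d := Module.finrank ℂ U
  have hd : 0 < d := Module.finrank_pos
  set B := stdOrthonormalBasis ℂ U
  set b := fun k => (B k : EuclideanSpace ℂ (ι₁ × ι₂))
  have hb : Orthonormal ℂ b := B.orthonormal.comp_linearIsometry U.subtypeₗᵢ
  set χ := (((√d)⁻¹ : ℝ) : ℂ) • ∑ k, regroupTensor (b k) (conjVec (b k))
  have hχU : χ ∈ tensorSub U (conjSubmodule U) :=
    Submodule.smul_mem _ _ <| Submodule.sum_mem _ fun k _ =>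
      regroupTensor_mem_tensorSub (B k).2 ⟨b k, (B k).2, rfl⟩
  have hχ : ‖χ‖ = 1 := by
    rw [norm_smul, hb.norm_sum_regroupTensor_conjVec, Fintype.card_fin, Complex.norm_real,
      Real.norm_of_nonneg (by positivity), inv_mul_cancel₀ (by positivity)]
  have hoverlap : ‖⟪prodVec2 (maxEntVec ι₁) (maxEntVec ι₂), χ⟫_ℂ‖ ^ 2 =
      d / (Fintype.card ι₁ * Fintype.card ι₂) := by
    rw [inner_smul_right, hb.inner_prodVec2_maxEntVec_sum_regroupTensor_conjVec, Fintype.card_fin,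
      ← Complex.ofReal_mul, Complex.norm_real, Real.norm_eq_abs, sq_abs]
    field_simp
    rw [Real.sq_sqrt (by positivity), Real.sq_sqrt (by positivity)]
    ring
  exact hminEnt_le_of_le_norm_inner_prodVec2_sq hp hχU hχ (norm_maxEntVec ι₁)
    (norm_maxEntVec ι₂) (by positivity [hd]) hoverlap.ge

theorem stmt12_general (p : ℝ) (hp : 1 < p) (nA nB : ℕ)
    (U : Submodule ℂ (EuclideanSpace ℂ (Fin nA × Fin nB))) (hU : U ≠ ⊥) :
    hminEnt p (tensorSub U (conjSubmodule U)) ≤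
      (p / (1 - p)) * Real.logb 2 ((Module.finrank ℂ U : ℝ) / (nA * nB)) := by
  simpa using hminEnt_tensorSub_conjSubmodule_le hp hU

/-- For a nonzero subspace `U ⊆ ℂ^{n_A} ⊗ ℂ^{n_B}`,
`H_{min,p}(U ⊗ Ū) ≤ (p/(1−p)) log₂(dim U/(n_A n_B))`, where `U ⊗ Ū` is regrouped as a
bipartite subspace of `(ℂ^{n_A} ⊗ ℂ^{n_A}) ⊗ (ℂ^{n_B} ⊗ ℂ^{n_B})`. -/
theorem stmt12 (p : ℝ) (hp : 1 < p) (nA nB : ℕ) (hA : 1 ≤ nA) (hB : 1 ≤ nB)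
    (U : Submodule ℂ (EuclideanSpace ℂ (Fin nA × Fin nB))) (hU : U ≠ ⊥) :
    hminEnt p (tensorSub U (conjSubmodule U)) ≤
      (p / (1 - p)) * Real.logb 2 ((Module.finrank ℂ U : ℝ) / (nA * nB)) :=
  stmt12_general p hp nA nB U hU
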